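/- arXiv:2312.11928 — 5 statements merged into one kernel-verified Lean document; each statement's English description precedes it below -/
import Mathlib

section
/- Let R = ℂ[[u,v]] (or the convergent power series ring), and let g ∈ R have 3-jet j³g = α₁α₂α₃ a product of three pairwise non-proportional nonzero linear forms in u, v. Then the cube of the maximal ideal m = (u,v) is contained in the Jacobian ideal J_g = (g_u, g_v). -/
/-!
Put `f = α₁α₂α₃` and `𝔪 = (u, v)`. Since `g - f ∈ 𝔪⁴`, the partials of `g` agree with those of
`f` modulo `𝔪³`. The partials `f_u, f_v` are binary quadratics whose Sylvester matrix has
determinant `-3 · disc f`, and `disc f = ∏ᵢ<ⱼ (aᵢbⱼ - aⱼbᵢ)² ≠ 0`. So every cubic monomial is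
`L₁ f_u + L₂ f_v` with linear forms `L₁, L₂`, that is `𝔪³ ⊆ 𝔪 (f_u, f_v) ⊆ J_g + 𝔪⁴`, and
Nakayama's lemma in the local ring `ℂ[[u, v]]` gives `𝔪³ ⊆ J_g`.
-/

open MvPowerSeries

/-- Formal partial derivative of a power series in two variables. -/
noncomputable def psDeriv (i : Fin 2) (g : MvPowerSeries (Fin 2) ℂ) :
    MvPowerSeries (Fin 2) ℂ :=
  fun s => ((s i : ℂ) + 1) * MvPowerSeries.coeff (s + Finsupp.single i 1) g

/-- The linear form a·u + b·v as a power series. -/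
noncomputable def linForm (a b : ℂ) : MvPowerSeries (Fin 2) ℂ :=
  a • (MvPowerSeries.X 0) + b • (MvPowerSeries.X 1)

theorem Derivation.map_mem_pow_of_mem_pow_succ {R A : Type*} [CommSemiring R] [CommSemiring A]
    [Algebra R A] (D : Derivation R A A) {I : Ideal A} {n : ℕ} {x : A} (hx : x ∈ I ^ (n + 1)) :
    D x ∈ I ^ n := by
  induction n generalizing x with
  | zero => simp
  | succ n ih =>
    rw [pow_succ'] at hx
    refine Submodule.mul_induction_on hx (fun a ha b hb => ?_)
      (fun x y hx hy => by rw [map_add]; exact add_mem hx hy)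
    rw [D.leibniz, smul_eq_mul, smul_eq_mul]
    exact add_mem (pow_succ' I n ▸ Ideal.mul_mem_mul ha (ih hb)) (Ideal.mul_mem_right _ _ hb)

theorem Ideal.span_pair_pow_le {S : Type*} [CommSemiring S] {x y : S} {I : Ideal S} {n : ℕ}
    (h : ∀ i j, i + j = n → x ^ i * y ^ j ∈ I) : Ideal.span {x, y} ^ n ≤ I := by
  induction n generalizing I with
  | zero => simpa [Ideal.eq_top_iff_one] using h 0 0 rfl
  | succ n ih =>
    have hx : Ideal.span {x, y} ^ n ≤ I.colon {x} := ih fun i j hij => by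
      rw [Submodule.mem_colon_singleton, smul_eq_mul, mul_right_comm, ← pow_succ]
      exact h _ _ (by omega)
    have hy : Ideal.span {x, y} ^ n ≤ I.colon {y} := ih fun i j hij => by
      rw [Submodule.mem_colon_singleton, smul_eq_mul, mul_assoc, ← pow_succ]
      exact h _ _ (by omega)
    rw [pow_succ']
    refine Ideal.mul_le.2 fun r hr s hs => ?_
    obtain ⟨a, b, rfl⟩ := Ideal.mem_span_pair.1 hr
    have hxs : s * x ∈ I := Submodule.mem_colon_singleton.1 (hx hs)
    have hys : s * y ∈ I := Submodule.mem_colon_singleton.1 (hy hs)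
    rw [show (a * x + b * y) * s = a * (s * x) + b * (s * y) by ring]
    exact add_mem (I.mul_mem_left a hxs) (I.mul_mem_left b hys)

theorem Matrix.span_range_le_span_range_sum_smul {K M : Type*} [Field K] [AddCommGroup M]
    [Module K M] {n : ℕ} {A : Matrix (Fin n) (Fin n) K} (hA : A.det ≠ 0) (e : Fin n → M) :
    Submodule.span K (Set.range e) ≤ Submodule.span K (Set.range fun i => ∑ j, A i j • e j) := by
  rw [Submodule.span_le]
  rintro _ ⟨k, rfl⟩
  have hk : e k = ∑ i, A⁻¹ k i • ∑ j, A i j • e j := by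
    simp only [Finset.smul_sum, smul_smul]
    rw [Finset.sum_comm]
    simp only [← Finset.sum_smul, ← Matrix.mul_apply,
      Matrix.nonsing_inv_mul A (isUnit_iff_ne_zero.2 hA), Matrix.one_apply, ite_smul, one_smul,
      zero_smul, Finset.sum_ite_eq, Finset.mem_univ, if_true]
  rw [hk]
  exact Submodule.sum_mem _ fun i _ => Submodule.smul_mem _ _ (Submodule.subset_span ⟨i, rfl⟩)

section BinaryForms

variable {K S : Type*}

/-- The rows are the coefficients of `x q, y q, x r, y r` in the basis `x³, x²y, xy², y³`, where
`q = binaryQuadratic γ x y` and `r = binaryQuadratic δ x y`. -/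
def sylvesterMatrix₂ [Zero K] (γ δ : Fin 3 → K) : Matrix (Fin 4) (Fin 4) K :=
  !![γ 0, γ 1, γ 2, 0; 0, γ 0, γ 1, γ 2; δ 0, δ 1, δ 2, 0; 0, δ 0, δ 1, δ 2]

def binaryQuadratic [CommSemiring K] [CommSemiring S] [Algebra K S] (γ : Fin 3 → K) (x y : S) :
    S :=
  γ 0 • x ^ 2 + γ 1 • (x * y) + γ 2 • y ^ 2

theorem span_pair_pow_three_le_of_det_sylvesterMatrix₂_ne_zero [Field K] [CommRing S]
    [Algebra K S] {γ δ : Fin 3 → K} (h : (sylvesterMatrix₂ γ δ).det ≠ 0) (x y : S) :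
    Ideal.span {x, y} ^ 3 ≤
      Ideal.span {x, y} * Ideal.span {binaryQuadratic γ x y, binaryQuadratic δ x y} := by
  set I := Ideal.span {x, y} * Ideal.span {binaryQuadratic γ x y, binaryQuadratic δ x y}
  let e : Fin 4 → S := fun k => x ^ (3 - k : ℕ) * y ^ (k : ℕ)
  have hrows : (fun i => ∑ j, sylvesterMatrix₂ γ δ i j • e j) =
      ![x * binaryQuadratic γ x y, y * binaryQuadratic γ x y,
        x * binaryQuadratic δ x y, y * binaryQuadratic δ x y] := by
    funext i
    fin_cases i <;>
      simp only [Fin.sum_univ_four, e, sylvesterMatrix₂, binaryQuadratic, Matrix.of_apply,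
        Matrix.cons_val, Fin.reduceFinMk, Fin.coe_ofNat_eq_mod, Nat.reduceMod, Algebra.smul_def,
        map_zero] <;>
      ring
  have hspan : Submodule.span K (Set.range e) ≤ I.restrictScalars K := by
    refine (Matrix.span_range_le_span_range_sum_smul h e).trans ?_
    rw [hrows, Submodule.span_le]
    rintro _ ⟨i, rfl⟩
    fin_cases i <;>
      exact Ideal.mul_mem_mul (Ideal.subset_span (by simp)) (Ideal.subset_span (by simp))
  refine Ideal.span_pair_pow_le fun i j hij => ?_
  have he : x ^ i * y ^ j = e ⟨j, by omega⟩ := by simp only [e]; congr 2; omega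
  exact he ▸ hspan (Submodule.subset_span ⟨_, rfl⟩)

end BinaryForms

namespace Cubic

variable {K : Type*} [CommRing K]

/-- The coefficients of `∏ᵢ (aᵢ x + bᵢ y)` at `x³, x²y, xy², y³`. -/
def ofLinearFactors (a b : Fin 3 → K) : Cubic K where
  a := a 0 * a 1 * a 2
  b := a 0 * a 1 * b 2 + a 0 * b 1 * a 2 + b 0 * a 1 * a 2
  c := a 0 * b 1 * b 2 + b 0 * a 1 * b 2 + b 0 * b 1 * a 2
  d := b 0 * b 1 * b 2

theorem discr_ofLinearFactors (a b : Fin 3 → K) :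
    (ofLinearFactors a b).discr =
      ((a 0 * b 1 - a 1 * b 0) * (a 0 * b 2 - a 2 * b 0) * (a 1 * b 2 - a 2 * b 1)) ^ 2 := by
  simp only [ofLinearFactors, discr]
  ring

theorem det_sylvesterMatrix₂_partials (P : Cubic K) :
    (sylvesterMatrix₂ ![3 * P.a, 2 * P.b, P.c] ![P.b, 2 * P.c, 3 * P.d]).det = -3 * P.discr := by
  rw [Matrix.det_succ_row_zero, Fin.sum_univ_four]
  simp only [sylvesterMatrix₂, Matrix.det_fin_three, Matrix.submatrix_apply, Matrix.of_apply,
    Matrix.cons_val', Matrix.cons_val, Fin.succAbove, Fin.reduceSucc, Fin.reduceCastSucc,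
    Fin.reduceLT, ↓reduceIte, Fin.val_zero, Fin.val_one, Fin.val_two, discr]
  ring

end Cubic

namespace MvPowerSeries

variable {R : Type*} [CommSemiring R]

theorem exists_eq_X_zero_mul_add_X_one_mul {f : MvPowerSeries (Fin 2) R} {n : ℕ}
    (hf : ((n + 1 : ℕ) : ℕ∞) ≤ f.order) :
    ∃ A B : MvPowerSeries (Fin 2) R, f = X 0 * A + X 1 * B ∧ ↑n ≤ A.order ∧ ↑n ≤ B.order := by
  have hcoeff : ∀ s, s.degree < n + 1 → coeff s f = 0 := fun s hs =>
    coeff_of_lt_order (lt_of_lt_of_le (by exact_mod_cast hs) hf)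
  -- `X 0 * A` collects the monomials of `f` divisible by `X 0`, and `X 1 * B` the others.
  let A : MvPowerSeries (Fin 2) R := fun s => coeff (s + Finsupp.single 0 1) f
  let B : MvPowerSeries (Fin 2) R := fun s =>
    if s 0 = 0 then coeff (s + Finsupp.single 1 1) f else 0
  have hA (s) : coeff s A = coeff (s + Finsupp.single 0 1) f := rfl
  have hB (s) : coeff s B = if s 0 = 0 then coeff (s + Finsupp.single 1 1) f else 0 := rfl
  refine ⟨A, B, ?_, nat_le_order fun s hs => hcoeff _ (by simpa using hs),
    nat_le_order fun s hs => ?_⟩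
  · ext s
    have hsub (i : Fin 2) (hi : s i ≠ 0) : s - Finsupp.single i 1 + Finsupp.single i 1 = s :=
      tsub_add_cancel_of_le (Finsupp.single_le_iff.2 (Nat.one_le_iff_ne_zero.2 hi))
    have hsub0 : (s - Finsupp.single 1 1 : Fin 2 →₀ ℕ) 0 = s 0 := by simp
    simp only [map_add, X_def, coeff_monomial_mul, Finsupp.single_le_iff, Nat.one_le_iff_ne_zero,
      one_mul, hA, hB, hsub0]
    by_cases h0 : s 0 = 0
    · by_cases h1 : s 1 = 0
      · have hs : s = 0 := by ext i; fin_cases i <;> assumption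
        simp [hs, hcoeff 0 (by simp)]
      · simp [h0, h1, hsub]
    · simp [h0, hsub]
  · rw [hB]
    split_ifs
    · exact hcoeff _ (by simpa using hs)
    · rfl

theorem mem_span_X_pow_of_le_order {f : MvPowerSeries (Fin 2) R} {n : ℕ} (hf : ↑n ≤ f.order) :
    f ∈ Ideal.span {X 0, X 1} ^ n := by
  induction n generalizing f with
  | zero => simp
  | succ n ih =>
    obtain ⟨A, B, rfl, hA, hB⟩ := exists_eq_X_zero_mul_add_X_one_mul hf
    rw [pow_succ']
    exact add_mem (Ideal.mul_mem_mul (Ideal.subset_span (by simp)) (ih hA))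
      (Ideal.mul_mem_mul (Ideal.subset_span (by simp)) (ih hB))

theorem X_mem_maximalIdeal {σ K : Type*} [Field K] (i : σ) :
    X i ∈ IsLocalRing.maximalIdeal (MvPowerSeries σ K) := by
  rw [IsLocalRing.mem_maximalIdeal, mem_nonunits_iff, isUnit_iff_constantCoeff, constantCoeff_X]
  exact not_isUnit_zero

end MvPowerSeries

theorem psDeriv_eq_pderiv (i : Fin 2) (g : MvPowerSeries (Fin 2) ℂ) :
    psDeriv i g = pderiv ℂ i g := by
  ext s
  rw [coeff_pderiv, mul_comm]
  rfl

theorem one_le_order_linForm (a b : ℂ) : 1 ≤ (linForm a b).order := by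
  rw [one_le_order_iff_constCoeff_eq_zero]
  simp [linForm]

theorem pderiv_zero_linForm_mul_linForm_mul_linForm (a b : Fin 3 → ℂ) :
    pderiv ℂ 0 (linForm (a 0) (b 0) * linForm (a 1) (b 1) * linForm (a 2) (b 2)) =
      binaryQuadratic ![3 * (Cubic.ofLinearFactors a b).a, 2 * (Cubic.ofLinearFactors a b).b,
        (Cubic.ofLinearFactors a b).c] (X 0) (X 1) := by
  simp only [linForm, binaryQuadratic, Cubic.ofLinearFactors, Derivation.leibniz, map_add,
    pderiv_C, pderiv_X_self, pderiv_X_of_ne (one_ne_zero : (1 : Fin 2) ≠ 0), smul_eq_C_mul,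
    map_mul, map_ofNat C, Matrix.cons_val]
  ring

theorem pderiv_one_linForm_mul_linForm_mul_linForm (a b : Fin 3 → ℂ) :
    pderiv ℂ 1 (linForm (a 0) (b 0) * linForm (a 1) (b 1) * linForm (a 2) (b 2)) =
      binaryQuadratic ![(Cubic.ofLinearFactors a b).b, 2 * (Cubic.ofLinearFactors a b).c,
        3 * (Cubic.ofLinearFactors a b).d] (X 0) (X 1) := by
  simp only [linForm, binaryQuadratic, Cubic.ofLinearFactors, Derivation.leibniz, map_add,
    pderiv_C, pderiv_X_self, pderiv_X_of_ne (zero_ne_one : (0 : Fin 2) ≠ 1), smul_eq_C_mul,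
    map_mul, map_ofNat C, Matrix.cons_val]
  ring

theorem span_X_pow_three_le_mul_span_pderiv_linForm_mul {a b : Fin 3 → ℂ}
    (hprop : ∀ i j : Fin 3, i ≠ j → a i * b j - a j * b i ≠ 0) :
    Ideal.span {X 0, X 1} ^ 3 ≤ Ideal.span {X 0, X 1} *
      Ideal.span {pderiv ℂ 0 (linForm (a 0) (b 0) * linForm (a 1) (b 1) * linForm (a 2) (b 2)),
        pderiv ℂ 1 (linForm (a 0) (b 0) * linForm (a 1) (b 1) * linForm (a 2) (b 2))} := by
  rw [pderiv_zero_linForm_mul_linForm_mul_linForm, pderiv_one_linForm_mul_linForm_mul_linForm]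
  refine span_pair_pow_three_le_of_det_sylvesterMatrix₂_ne_zero ?_ _ _
  rw [Cubic.det_sylvesterMatrix₂_partials, Cubic.discr_ofLinearFactors]
  exact mul_ne_zero (by norm_num) <| pow_ne_zero _ <| mul_ne_zero
    (mul_ne_zero (hprop 0 1 (by decide)) (hprop 0 2 (by decide))) (hprop 1 2 (by decide))

theorem sub_linForm_mul_mem_span_X_pow_four {g : MvPowerSeries (Fin 2) ℂ} {a b : Fin 3 → ℂ}
    (hlow : ∀ s : Fin 2 →₀ ℕ, s.degree < 3 → coeff s g = 0)
    (hjet : ∀ s : Fin 2 →₀ ℕ, s.degree = 3 →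
      coeff s g = coeff s (linForm (a 0) (b 0) * linForm (a 1) (b 1) * linForm (a 2) (b 2))) :
    g - linForm (a 0) (b 0) * linForm (a 1) (b 1) * linForm (a 2) (b 2) ∈
      Ideal.span {X 0, X 1} ^ 4 := by
  have hf : (3 : ℕ∞) ≤ (linForm (a 0) (b 0) * linForm (a 1) (b 1) * linForm (a 2) (b 2)).order :=
    calc (3 : ℕ∞) = 1 + 1 + 1 := by norm_num
      _ ≤ _ := add_le_add (add_le_add (one_le_order_linForm _ _) (one_le_order_linForm _ _)
          |>.trans le_order_mul) (one_le_order_linForm _ _) |>.trans le_order_mul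
  refine mem_span_X_pow_of_le_order (nat_le_order fun s hs => ?_)
  rcases Nat.lt_succ_iff_lt_or_eq.1 hs with hs | hs
  · rw [map_sub, hlow s hs, coeff_of_lt_order ((Nat.cast_lt.2 hs).trans_le hf), sub_zero]
  · rw [map_sub, hjet s hs, sub_self]

theorem cube_of_maximal_ideal_in_jacobian_of_D4_general
    (g : MvPowerSeries (Fin 2) ℂ) (a b : Fin 3 → ℂ)
    (hprop : ∀ i j : Fin 3, i ≠ j → a i * b j - a j * b i ≠ 0)
    (hlow : ∀ s : Fin 2 →₀ ℕ, s.sum (fun _ n => n) < 3 → MvPowerSeries.coeff s g = 0)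
    (hjet : ∀ s : Fin 2 →₀ ℕ, s.sum (fun _ n => n) = 3 →
      MvPowerSeries.coeff s g =
      MvPowerSeries.coeff s (linForm (a 0) (b 0) * linForm (a 1) (b 1) * linForm (a 2) (b 2))) :
    (Ideal.span {(MvPowerSeries.X 0 : MvPowerSeries (Fin 2) ℂ), MvPowerSeries.X 1}) ^ 3 ≤
      Ideal.span {psDeriv 0 g, psDeriv 1 g} := by
  set 𝔪 : Ideal (MvPowerSeries (Fin 2) ℂ) := Ideal.span {X 0, X 1}
  set J := Ideal.span {psDeriv 0 g, psDeriv 1 g}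
  set f := linForm (a 0) (b 0) * linForm (a 1) (b 1) * linForm (a 2) (b 2)
  have hgf : g - f ∈ 𝔪 ^ (3 + 1) := sub_linForm_mul_mem_span_X_pow_four hlow hjet
  have hpderiv (i : Fin 2) (hi : psDeriv i g ∈ J) : pderiv ℂ i f ∈ J ⊔ 𝔪 ^ 3 := by
    rw [← sub_sub_cancel (pderiv ℂ i g) (pderiv ℂ i f), ← map_sub, ← psDeriv_eq_pderiv]
    exact sub_mem (Submodule.mem_sup_left hi)
      (Submodule.mem_sup_right ((pderiv ℂ i).map_mem_pow_of_mem_pow_succ hgf))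
  have hspan : Ideal.span {pderiv ℂ 0 f, pderiv ℂ 1 f} ≤ J ⊔ 𝔪 ^ 3 := by
    rw [Ideal.span_le, Set.pair_subset_iff]
    exact ⟨hpderiv 0 (Ideal.subset_span (by simp)), hpderiv 1 (Ideal.subset_span (by simp))⟩
  have hjac : 𝔪 ≤ (⊥ : Ideal (MvPowerSeries (Fin 2) ℂ)).jacobson := by
    rw [IsLocalRing.jacobson_eq_maximalIdeal ⊥ bot_ne_top, Ideal.span_le, Set.pair_subset_iff]
    exact ⟨X_mem_maximalIdeal 0, X_mem_maximalIdeal 1⟩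
  refine Submodule.le_of_le_smul_of_le_jacobson_bot ((Submodule.fg_span (Set.toFinite _)).pow 3)
    hjac ?_
  calc 𝔪 ^ 3 ≤ 𝔪 * Ideal.span {pderiv ℂ 0 f, pderiv ℂ 1 f} :=
        span_X_pow_three_le_mul_span_pderiv_linForm_mul hprop
    _ ≤ 𝔪 * (J ⊔ 𝔪 ^ 3) := Ideal.mul_mono_right hspan
    _ = 𝔪 * J ⊔ 𝔪 • 𝔪 ^ 3 := Ideal.mul_sup _ _ _
    _ ≤ J ⊔ 𝔪 • 𝔪 ^ 3 := sup_le_sup_right Ideal.mul_le_right _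

/-- If g has vanishing 2-jet and its 3-jet is a product of three pairwise non-proportional
nonzero linear forms (a D₄ singularity), then m³ ⊆ J_g = (g_u, g_v). -/
theorem cube_of_maximal_ideal_in_jacobian_of_D4
    (g : MvPowerSeries (Fin 2) ℂ) (a b : Fin 3 → ℂ)
    (hne : ∀ i, (a i, b i) ≠ (0, 0))
    (hprop : ∀ i j : Fin 3, i ≠ j → a i * b j - a j * b i ≠ 0)
    (hlow : ∀ s : Fin 2 →₀ ℕ, s.sum (fun _ n => n) < 3 → MvPowerSeries.coeff s g = 0)
    (hjet : ∀ s : Fin 2 →₀ ℕ, s.sum (fun _ n => n) = 3 →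
      MvPowerSeries.coeff s g =
      MvPowerSeries.coeff s (linForm (a 0) (b 0) * linForm (a 1) (b 1) * linForm (a 2) (b 2))) :
    (Ideal.span {(MvPowerSeries.X 0 : MvPowerSeries (Fin 2) ℂ), MvPowerSeries.X 1}) ^ 3 ≤
      Ideal.span {psDeriv 0 g, psDeriv 1 g} :=
  cube_of_maximal_ideal_in_jacobian_of_D4_general g a b hprop hlow hjet
end

section
/- Let R = ℂ[[u,v]], g ∈ R with j³g = α₁α₂α₃ a product of three pairwise non-proportional linear forms, and f ∈ R with 2-jet j²f = α₁·α for some linear form α. Then f belongs to the Jacobian ideal J_g = (g_u, g_v) if and only if α is proportional to the coefficient of du ∧ dv in dα₁ ∧ d(α₂α₃). -/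
/-!
Let `Iₙ = orderIdeal n` be the ideal of series of order `≥ n` in `ℂ[[u,v]]` and `C = α₁α₂α₃` the
cubic jet of `g`. Since the three lines are distinct, the Sylvester resultant of `C_u` and `C_v` is
`-3 ∏ (aᵢbⱼ - aⱼbᵢ)² ≠ 0`, so every cubic form is `A C_u + B C_v` with `A, B` linear. Subtracting
`A g_u + B g_v` from a series of order `≥ 3` raises its order, so `I₃ ⊆ J_g + I₄ = J_g + I₁ I₃`,
and Nakayama's lemma gives `I₃ ⊆ J_g`. Hence `f ∈ J_g` iff `j²f = α₁α` equals `c₀ C_u + c₁ C_v`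
for some constants. Restricting to the line `α₁ = 0` forces `(c₀, c₁)` to be proportional to
`(b₁, -a₁)`, and `b₁ C_u - a₁ C_v` is `-α₁` times the coefficient of `du ∧ dv` in `dα₁ ∧ d(α₂α₃)`.
-/

open MvPowerSeries

theorem Finsupp.degree_fin_two (s : Fin 2 →₀ ℕ) : s.degree = s 0 + s 1 := by
  rw [Finsupp.degree_eq_sum, Fin.sum_univ_two]

namespace MvPowerSeries

section OrderIdeal

variable {σ R : Type*} [CommRing R]

def orderIdeal (n : ℕ) : Ideal (MvPowerSeries σ R) where
  carrier := {f | (n : ℕ∞) ≤ f.order}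
  zero_mem' := by simp
  add_mem' hf hg := (le_min hf hg).trans min_order_le_add
  smul_mem' _ _ hf := hf.trans (le_add_self.trans le_order_mul)

theorem mem_orderIdeal_iff {n : ℕ} {f : MvPowerSeries σ R} :
    f ∈ orderIdeal n ↔ ∀ d : σ →₀ ℕ, d.degree < n → coeff d f = 0 :=
  ⟨fun hf _ hd => coeff_of_lt_order (lt_of_lt_of_le (by exact_mod_cast hd) hf),
    fun h => nat_le_order h⟩

theorem mul_mem_orderIdeal {m n : ℕ} {f g : MvPowerSeries σ R}
    (hf : f ∈ orderIdeal m) (hg : g ∈ orderIdeal n) : f * g ∈ orderIdeal (m + n) :=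
  le_trans (by push_cast; exact add_le_add hf hg) le_order_mul

theorem IsHomogeneous.mem_orderIdeal {n : ℕ} {f : MvPowerSeries σ R} (hf : f.IsHomogeneous n) :
    f ∈ orderIdeal n :=
  mem_orderIdeal_iff.2 fun _ hd => hf.coeff_eq_zero hd.ne

theorem X_mem_orderIdeal_one (i : σ) : (X i : MvPowerSeries σ R) ∈ orderIdeal 1 :=
  mem_orderIdeal_iff.2 fun d hd => by
    rw [Nat.lt_one_iff, Finsupp.degree_eq_zero_iff] at hd
    simp [hd]

theorem mem_orderIdeal_succ {n : ℕ} {f : MvPowerSeries σ R} (hf : f ∈ orderIdeal n)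
    (h : homogeneousComponent n f = 0) : f ∈ orderIdeal (n + 1) := by
  refine mem_orderIdeal_iff.2 fun d hd => ?_
  rcases Nat.lt_succ_iff_lt_or_eq.1 hd with hd | hd
  · exact mem_orderIdeal_iff.1 hf d hd
  · simpa [coeff_homogeneousComponent, hd] using congr(coeff d $h)

theorem orderIdeal_one_le_jacobson [IsLocalRing R] :
    (orderIdeal 1 : Ideal (MvPowerSeries σ R)) ≤ Ideal.jacobson ⊥ := by
  intro f hf
  rw [IsLocalRing.jacobson_eq_maximalIdeal ⊥ bot_ne_top, IsLocalRing.mem_maximalIdeal,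
    mem_nonunits_iff, isUnit_iff_constantCoeff,
    (one_le_order_iff_constCoeff_eq_zero).1 (by exact_mod_cast hf)]
  exact not_isUnit_zero

theorem homogeneousComponent_zero (f : MvPowerSeries σ R) :
    homogeneousComponent 0 f = C (constantCoeff f) := by
  ext d
  classical
  simp only [coeff_homogeneousComponent, coeff_C, Finsupp.degree_eq_zero_iff]
  split_ifs with h <;> simp [h]

theorem homogeneousComponent_eq_of_coeff_eq {n : ℕ} {f H : MvPowerSeries σ R}
    (hH : H.IsHomogeneous n) (h : ∀ d : σ →₀ ℕ, d.degree = n → coeff d f = coeff d H) :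
    homogeneousComponent n f = H := by
  ext d
  rw [coeff_homogeneousComponent]
  split_ifs with hd
  · exact h d hd
  · exact (hH.coeff_eq_zero hd).symm

theorem homogeneousComponent_pderiv (n : ℕ) (i : σ) (f : MvPowerSeries σ R) :
    homogeneousComponent n (pderiv R i f) = pderiv R i (homogeneousComponent (n + 1) f) := by
  ext d
  classical
  simp only [coeff_homogeneousComponent, coeff_pderiv, map_add, Finsupp.degree_single,
    Nat.add_right_cancel_iff]
  split_ifs <;> simp

theorem pderiv_mem_orderIdeal {n : ℕ} (i : σ) {f : MvPowerSeries σ R}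
    (hf : f ∈ orderIdeal (n + 1)) : pderiv R i f ∈ orderIdeal n := by
  refine mem_orderIdeal_iff.2 fun d hd => ?_
  rw [coeff_pderiv, mem_orderIdeal_iff.1 hf _ (by rw [map_add, Finsupp.degree_single]; omega),
    zero_mul]

theorem mem_span_pair_iff_homogeneousComponent {n : ℕ} {G₀ G₁ f : MvPowerSeries σ R}
    (hJ : orderIdeal (n + 1) ≤ Ideal.span {G₀, G₁})
    (h₀ : G₀ ∈ orderIdeal n) (h₁ : G₁ ∈ orderIdeal n) (hf : f ∈ orderIdeal n) :
    f ∈ Ideal.span {G₀, G₁} ↔ ∃ c₀ c₁ : R, homogeneousComponent n f =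
      c₀ • homogeneousComponent n G₀ + c₁ • homogeneousComponent n G₁ := by
  constructor
  · intro h
    obtain ⟨A, B, rfl⟩ := Ideal.mem_span_pair.1 h
    refine ⟨constantCoeff A, constantCoeff B, ?_⟩
    rw [map_add, ← zero_add n, homogeneousComponent_mul_of_le_order (by simp) h₀,
      homogeneousComponent_mul_of_le_order (by simp) h₁, homogeneousComponent_zero,
      homogeneousComponent_zero, smul_eq_C_mul, smul_eq_C_mul, zero_add]
  · rintro ⟨c₀, c₁, h⟩
    have hr : f - (C c₀ * G₀ + C c₁ * G₁) ∈ orderIdeal (n + 1) := by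
      refine mem_orderIdeal_succ (sub_mem hf (add_mem (Ideal.mul_mem_left _ _ h₀)
        (Ideal.mul_mem_left _ _ h₁))) ?_
      rw [map_sub, map_add, ← smul_eq_C_mul, ← smul_eq_C_mul, map_smul, map_smul, h, sub_self]
    simpa using add_mem (Ideal.mem_span_pair.2 ⟨C c₀, C c₁, rfl⟩) (hJ hr)

end OrderIdeal

section TwoVariables

variable {R : Type*} [CommRing R]

theorem orderIdeal_succ_le_mul (n : ℕ) :
    (orderIdeal (n + 1) : Ideal (MvPowerSeries (Fin 2) R)) ≤ orderIdeal 1 * orderIdeal n := by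
  classical
  intro f hf
  -- `f = u y₀ + v y₁`, where `y₁` only collects the monomials of `f` not divisible by `u`
  let y₀ : MvPowerSeries (Fin 2) R := fun d => coeff (d + Finsupp.single 0 1) f
  let y₁ : MvPowerSeries (Fin 2) R :=
    fun d => if d 0 = 0 then coeff (d + Finsupp.single 1 1) f else 0
  have hy₀ : y₀ ∈ orderIdeal n := mem_orderIdeal_iff.2 fun d hd =>
    mem_orderIdeal_iff.1 hf _ (by rw [map_add, Finsupp.degree_single]; omega)
  have hy₁ : y₁ ∈ orderIdeal n := mem_orderIdeal_iff.2 fun d hd => by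
    change ite _ _ _ = _
    rw [mem_orderIdeal_iff.1 hf _ (by rw [map_add, Finsupp.degree_single]; omega), ite_self]
  have hf_eq : f = X 0 * y₀ + X 1 * y₁ := by
    ext s
    have c₀ : coeff (s - Finsupp.single 0 1) y₀ =
        coeff (s - Finsupp.single 0 1 + Finsupp.single 0 1) f := rfl
    have c₁ : coeff (s - Finsupp.single 1 1) y₁ = if s 0 = 0 then
        coeff (s - Finsupp.single 1 1 + Finsupp.single 1 1) f else 0 := by
      change ite ((s - Finsupp.single 1 1 : Fin 2 →₀ ℕ) 0 = 0) _ _ = _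
      simp
    simp only [map_add, X_def, coeff_monomial_mul, Finsupp.single_le_iff, one_mul, c₀, c₁]
    by_cases h0 : s 0 = 0
    · by_cases h1 : s 1 = 0
      · have : s = 0 := by ext i; fin_cases i <;> simp [h0, h1]
        subst this
        simpa using mem_orderIdeal_iff.1 hf 0 (by simp)
      · rw [if_neg (by omega), if_pos (by omega), if_pos h0,
          tsub_add_cancel_of_le (Finsupp.single_le_iff.2 (by omega)), zero_add]
    · rw [if_pos (by omega), if_neg h0, tsub_add_cancel_of_le (Finsupp.single_le_iff.2 (by omega)),
        ite_self, add_zero]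
  rw [hf_eq]
  exact add_mem (Ideal.mul_mem_mul (X_mem_orderIdeal_one 0) hy₀)
    (Ideal.mul_mem_mul (X_mem_orderIdeal_one 1) hy₁)

theorem orderIdeal_le_of_le_sup [IsNoetherianRing R] [IsLocalRing R]
    {J : Ideal (MvPowerSeries (Fin 2) R)} {n : ℕ} (h : orderIdeal n ≤ J ⊔ orderIdeal (n + 1)) :
    orderIdeal n ≤ J :=
  Submodule.le_of_le_smul_of_le_jacobson_bot (IsNoetherian.noetherian _) orderIdeal_one_le_jacobson
    (h.trans (sup_le_sup_left (orderIdeal_succ_le_mul n) _))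

end TwoVariables

section BinaryForms

variable {R : Type*} [CommRing R]

noncomputable def binaryExp (n k : ℕ) : Fin 2 →₀ ℕ := Finsupp.single 0 k + Finsupp.single 1 (n - k)

noncomputable def binaryForm (n : ℕ) (c : Fin (n + 1) → R) : MvPowerSeries (Fin 2) R :=
  ∑ k : Fin (n + 1), monomial (binaryExp n k) (c k)

theorem binaryExp_apply_zero (n k : ℕ) : binaryExp n k 0 = k := by
  simp [binaryExp]

theorem binaryExp_apply_one (n k : ℕ) : binaryExp n k 1 = n - k := by
  simp [binaryExp]

theorem degree_binaryExp {n k : ℕ} (hk : k ≤ n) : (binaryExp n k).degree = n := by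
  rw [Finsupp.degree_fin_two, binaryExp_apply_zero, binaryExp_apply_one]
  omega

theorem binaryExp_eq_self {n : ℕ} {s : Fin 2 →₀ ℕ} (h : s.degree = n) :
    binaryExp n (s 0) = s := by
  ext i
  fin_cases i
  · exact binaryExp_apply_zero _ _
  · show binaryExp n (s 0) 1 = s 1
    rw [binaryExp_apply_one, ← h, Finsupp.degree_fin_two]
    omega

theorem coeff_binaryForm (n : ℕ) (c : Fin (n + 1) → R) (s : Fin 2 →₀ ℕ) :
    coeff s (binaryForm n c) =
      if h : s.degree = n then c ⟨s 0, by rw [Finsupp.degree_fin_two] at h; omega⟩ else 0 := by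
  classical
  simp only [binaryForm, map_sum, coeff_monomial]
  split_ifs with h
  · rw [Finset.sum_eq_single ⟨s 0, _⟩, if_pos (binaryExp_eq_self h).symm]
    · rintro k - hk
      refine if_neg fun hs => hk (Fin.ext ?_)
      show (k : ℕ) = s 0
      rw [hs, binaryExp_apply_zero]
    · simp
  · refine Finset.sum_eq_zero fun k _ => if_neg ?_
    rintro rfl
    exact h (degree_binaryExp k.is_le)

theorem coeff_binaryExp_binaryForm (n : ℕ) (c : Fin (n + 1) → R) (k : Fin (n + 1)) :
    coeff (binaryExp n k) (binaryForm n c) = c k := by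
  rw [coeff_binaryForm, dif_pos (degree_binaryExp k.is_le)]
  simp only [binaryExp_apply_zero]

theorem isHomogeneous_binaryForm (n : ℕ) (c : Fin (n + 1) → R) :
    (binaryForm n c).IsHomogeneous n := by
  intro d hd
  rw [coeff_binaryForm] at hd
  rw [show Finsupp.weight (1 : Fin 2 → ℕ) = Finsupp.degree from Finsupp.degree_eq_weight_one.symm]
  by_contra h
  exact hd (dif_neg h)

theorem IsHomogeneous.eq_binaryForm {n : ℕ} {H : MvPowerSeries (Fin 2) R}
    (hH : H.IsHomogeneous n) : H = binaryForm n (fun k => coeff (binaryExp n k) H) := by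
  ext s
  rw [coeff_binaryForm]
  split_ifs with h
  · rw [Fin.val_mk, binaryExp_eq_self h]
  · exact hH.coeff_eq_zero h

theorem monomial_binaryExp (n k : ℕ) (a : R) :
    monomial (binaryExp n k) a = C a * X 0 ^ k * X 1 ^ (n - k) := by
  rw [X_pow_eq, X_pow_eq, mul_assoc, monomial_mul_monomial, one_mul, ← monomial_zero_eq_C_apply,
    monomial_mul_monomial, mul_one, zero_add, binaryExp]

theorem binaryForm_one (c : Fin 2 → R) : binaryForm 1 c = C (c 0) * X 1 + C (c 1) * X 0 := by
  simp [binaryForm, Fin.sum_univ_two, monomial_binaryExp]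

theorem binaryForm_two (c : Fin 3 → R) :
    binaryForm 2 c = C (c 0) * X 1 ^ 2 + C (c 1) * X 0 * X 1 + C (c 2) * X 0 ^ 2 := by
  simp [binaryForm, Fin.sum_univ_three, monomial_binaryExp]

theorem binaryForm_three (c : Fin 4 → R) : binaryForm 3 c =
    C (c 0) * X 1 ^ 3 + C (c 1) * X 0 * X 1 ^ 2 + C (c 2) * X 0 ^ 2 * X 1 + C (c 3) * X 0 ^ 3 := by
  simp [binaryForm, Fin.sum_univ_four, monomial_binaryExp]

/-- Row `k` collects the coefficients of `u^k v^(3-k)` in `(x₀v + x₁u) P + (y₀v + y₁u) Q`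
for `P = binaryForm 2 p`, `Q = binaryForm 2 q`, in the unknowns `(x₀, x₁, y₀, y₁)`. -/
def sylvesterMatrix (p q : Fin 3 → R) : Matrix (Fin 4) (Fin 4) R :=
  !![p 0, 0, q 0, 0; p 1, p 0, q 1, q 0; p 2, p 1, q 2, q 1; 0, p 2, 0, q 2]

theorem det_sylvesterMatrix (p q : Fin 3 → R) :
    (sylvesterMatrix p q).det =
      (p 0 * q 2 - p 2 * q 0) ^ 2 - (p 0 * q 1 - p 1 * q 0) * (p 1 * q 2 - p 2 * q 1) := by
  rw [sylvesterMatrix, Matrix.det_succ_row_zero, Fin.sum_univ_four]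
  simp only [Nat.succ_eq_add_one, Nat.reduceAdd, Fin.isValue, Fin.coe_ofNat_eq_mod, Nat.zero_mod,
    pow_zero, Matrix.of_apply, Matrix.cons_val', Matrix.cons_val_zero, Matrix.cons_val_fin_one,
    one_mul, Fin.succAbove_zero, Matrix.det_fin_three, Matrix.submatrix_apply, Fin.succ_zero_eq_one,
    Matrix.cons_val_one, Fin.succ_one_eq_two, Matrix.cons_val, Fin.reduceSucc, mul_zero, sub_zero,
    add_zero, Nat.one_mod, pow_one, Fin.succAbove, Fin.castSucc_zero, zero_lt_one, ↓reduceIte,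
    Fin.castSucc_one, lt_self_iff_false, Fin.reduceCastSucc, Fin.lt_one_iff, Fin.reduceEq, zero_mul,
    Nat.reduceMod, even_two, Even.neg_pow, one_pow, Fin.reduceLT, Nat.mod_succ, zero_sub]
  ring

theorem exists_binaryForm_eq_mul_add_mul {p q : Fin 3 → R} (h : IsUnit (sylvesterMatrix p q).det)
    (c : Fin 4 → R) : ∃ x y : Fin 2 → R,
      binaryForm 3 c = binaryForm 1 x * binaryForm 2 p + binaryForm 1 y * binaryForm 2 q := by
  obtain ⟨v, rfl⟩ := Matrix.mulVec_surjective_iff_isUnit.2 ((Matrix.isUnit_iff_isUnit_det _).2 h) c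
  refine ⟨![v 0, v 1], ![v 2, v 3], ?_⟩
  simp only [sylvesterMatrix, Matrix.cons_mulVec, Matrix.empty_mulVec, dotProduct,
    Fin.sum_univ_four, Matrix.cons_val_zero, Matrix.cons_val_one, Matrix.cons_val,
    Matrix.cons_val_fin_one, zero_mul, add_zero, zero_add, binaryForm_one, binaryForm_two,
    binaryForm_three, map_add, map_mul]
  ring

theorem orderIdeal_three_le_span_pair [IsNoetherianRing R] [IsLocalRing R]
    {G₀ G₁ : MvPowerSeries (Fin 2) R} {p q : Fin 3 → R}
    (h₀ : G₀ ∈ orderIdeal 2) (h₁ : G₁ ∈ orderIdeal 2)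
    (hp : homogeneousComponent 2 G₀ = binaryForm 2 p)
    (hq : homogeneousComponent 2 G₁ = binaryForm 2 q)
    (hdet : IsUnit (sylvesterMatrix p q).det) :
    orderIdeal 3 ≤ Ideal.span {G₀, G₁} := by
  refine orderIdeal_le_of_le_sup fun f hf => ?_
  obtain ⟨x, y, hxy⟩ := exists_binaryForm_eq_mul_add_mul hdet
    (fun k => coeff (binaryExp 3 k) (homogeneousComponent 3 f))
  rw [← IsHomogeneous.eq_binaryForm (isHomogeneous_homogeneousComponent f 3)] at hxy
  have hx := IsHomogeneous.mem_orderIdeal (isHomogeneous_binaryForm 1 x)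
  have hy := IsHomogeneous.mem_orderIdeal (isHomogeneous_binaryForm 1 y)
  have hr : f - (binaryForm 1 x * G₀ + binaryForm 1 y * G₁) ∈ orderIdeal 4 := by
    refine mem_orderIdeal_succ (sub_mem hf (add_mem (mul_mem_orderIdeal hx h₀)
      (mul_mem_orderIdeal hy h₁))) ?_
    rw [map_sub, map_add, show 3 = 1 + 2 from rfl, homogeneousComponent_mul_of_le_order hx h₀,
      homogeneousComponent_mul_of_le_order hy h₁, hp, hq,
      ← isHomogeneous_iff_eq_homogeneousComponent.1 (isHomogeneous_binaryForm 1 x),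
      ← isHomogeneous_iff_eq_homogeneousComponent.1 (isHomogeneous_binaryForm 1 y), ← hxy, sub_self]
  exact Submodule.mem_sup.2 ⟨_, Ideal.mem_span_pair.2 ⟨_, _, rfl⟩, _, hr, add_sub_cancel _ _⟩

end BinaryForms

end MvPowerSeries

theorem linForm_eq (a b : ℂ) : linForm a b = C a * X 0 + C b * X 1 := by
  rw [linForm, smul_eq_C_mul, smul_eq_C_mul]

theorem linForm_eq_binaryForm (a b : ℂ) : linForm a b = binaryForm 1 ![b, a] := by
  rw [linForm_eq, binaryForm_one, Matrix.cons_val_zero, Matrix.cons_val_one,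
    Matrix.cons_val_fin_one, add_comm]

theorem pderiv_zero_linForm (a b : ℂ) : pderiv ℂ 0 (linForm a b) = C a := by
  simp [linForm_eq]

theorem pderiv_one_linForm (a b : ℂ) : pderiv ℂ 1 (linForm a b) = C b := by
  simp [linForm_eq]

theorem isHomogeneous_linForm (a b : ℂ) : (linForm a b).IsHomogeneous 1 := by
  rw [linForm_eq_binaryForm]
  exact isHomogeneous_binaryForm 1 _

theorem linForm_ne_zero {a b : ℂ} (h : (a, b) ≠ (0, 0)) : linForm a b ≠ 0 := by
  intro h0
  rw [linForm_eq_binaryForm] at h0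
  have hb := congr(coeff (binaryExp 1 (0 : Fin 2)) $h0)
  have ha := congr(coeff (binaryExp 1 (1 : Fin 2)) $h0)
  simp only [coeff_binaryExp_binaryForm, map_zero] at ha hb
  exact h (by simp_all)

theorem linForm_mul_linForm (a b p q : ℂ) :
    linForm a b * linForm p q = binaryForm 2 ![b * q, a * q + b * p, a * p] := by
  simp only [linForm_eq, binaryForm_two, Matrix.cons_val_zero, Matrix.cons_val_one, Matrix.cons_val,
    map_add, map_mul]
  ring

noncomputable def cubicForm (a b : Fin 3 → ℂ) : MvPowerSeries (Fin 2) ℂ :=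
  linForm (a 0) (b 0) * linForm (a 1) (b 1) * linForm (a 2) (b 2)

theorem isHomogeneous_cubicForm (a b : Fin 3 → ℂ) : (cubicForm a b).IsHomogeneous 3 :=
  IsHomogeneous.mul (IsHomogeneous.mul (isHomogeneous_linForm _ _) (isHomogeneous_linForm _ _))
    (isHomogeneous_linForm _ _)

noncomputable def cubicDerivU (a b : Fin 3 → ℂ) : Fin 3 → ℂ :=
  ![a 0 * b 1 * b 2 + b 0 * a 1 * b 2 + b 0 * b 1 * a 2,
    2 * (a 0 * a 1 * b 2 + a 0 * b 1 * a 2 + b 0 * a 1 * a 2), 3 * (a 0 * a 1 * a 2)]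

noncomputable def cubicDerivV (a b : Fin 3 → ℂ) : Fin 3 → ℂ :=
  ![3 * (b 0 * b 1 * b 2), 2 * (a 0 * b 1 * b 2 + b 0 * a 1 * b 2 + b 0 * b 1 * a 2),
    a 0 * a 1 * b 2 + a 0 * b 1 * a 2 + b 0 * a 1 * a 2]

theorem pderiv_zero_cubicForm (a b : Fin 3 → ℂ) :
    pderiv ℂ 0 (cubicForm a b) = binaryForm 2 (cubicDerivU a b) := by
  simp only [cubicForm, Derivation.leibniz, pderiv_zero_linForm, smul_eq_mul]
  simp only [linForm_eq, binaryForm_two, cubicDerivU, Matrix.cons_val_zero, Matrix.cons_val_one,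
    Matrix.cons_val, map_add, map_mul, map_ofNat]
  ring

theorem pderiv_one_cubicForm (a b : Fin 3 → ℂ) :
    pderiv ℂ 1 (cubicForm a b) = binaryForm 2 (cubicDerivV a b) := by
  simp only [cubicForm, Derivation.leibniz, pderiv_one_linForm, smul_eq_mul]
  simp only [linForm_eq, binaryForm_two, cubicDerivV, Matrix.cons_val_zero, Matrix.cons_val_one,
    Matrix.cons_val, map_add, map_mul, map_ofNat]
  ring

theorem det_sylvesterMatrix_cubicDeriv_ne_zero {a b : Fin 3 → ℂ}
    (h₀₁ : a 0 * b 1 - a 1 * b 0 ≠ 0) (h₀₂ : a 0 * b 2 - a 2 * b 0 ≠ 0)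
    (h₁₂ : a 1 * b 2 - a 2 * b 1 ≠ 0) :
    (sylvesterMatrix (cubicDerivU a b) (cubicDerivV a b)).det ≠ 0 := by
  have hdisc : (sylvesterMatrix (cubicDerivU a b) (cubicDerivV a b)).det =
      -3 * ((a 0 * b 1 - a 1 * b 0) * (a 0 * b 2 - a 2 * b 0) * (a 1 * b 2 - a 2 * b 1)) ^ 2 := by
    simp only [det_sylvesterMatrix, cubicDerivU, cubicDerivV, Matrix.cons_val_zero,
      Matrix.cons_val_one, Matrix.cons_val]
    ring
  rw [hdisc]
  exact mul_ne_zero (by norm_num) (pow_ne_zero _ (mul_ne_zero (mul_ne_zero h₀₁ h₀₂) h₁₂))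

/-- The coefficient of `du ∧ dv` in `dα₁ ∧ d(α₂α₃)`, where `αᵢ₊₁ = linForm (a i) (b i)`. -/
noncomputable def wedgeCoeff (a b : Fin 3 → ℂ) : MvPowerSeries (Fin 2) ℂ :=
  a 0 • (b 2 • linForm (a 1) (b 1) + b 1 • linForm (a 2) (b 2))
    - b 0 • (a 2 • linForm (a 1) (b 1) + a 1 • linForm (a 2) (b 2))

theorem linForm_mul_wedgeCoeff (a b : Fin 3 → ℂ) :
    linForm (a 0) (b 0) * wedgeCoeff a b =
      a 0 • pderiv ℂ 1 (cubicForm a b) - b 0 • pderiv ℂ 0 (cubicForm a b) := by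
  simp only [wedgeCoeff, cubicForm, Derivation.leibniz, pderiv_zero_linForm, pderiv_one_linForm,
    smul_eq_mul]
  simp only [linForm_eq, smul_eq_C_mul]
  ring

theorem exists_linForm_mul_eq_iff {a b : Fin 3 → ℂ} {p q : ℂ}
    (h₀₁ : a 0 * b 1 - a 1 * b 0 ≠ 0) (h₀₂ : a 0 * b 2 - a 2 * b 0 ≠ 0) :
    (∃ c₀ c₁ : ℂ, linForm (a 0) (b 0) * linForm p q =
        c₀ • pderiv ℂ 0 (cubicForm a b) + c₁ • pderiv ℂ 1 (cubicForm a b)) ↔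
      ∃ c : ℂ, linForm p q = c • wedgeCoeff a b := by
  constructor
  · rintro ⟨c₀, c₁, h⟩
    have hk : ∀ k : Fin 3, ![b 0 * q, a 0 * q + b 0 * p, a 0 * p] k =
        c₀ * cubicDerivU a b k + c₁ * cubicDerivV a b k := fun k => by
      have := congr(coeff (binaryExp 2 k) $h)
      rwa [linForm_mul_linForm, pderiv_zero_cubicForm, pderiv_one_cubicForm, map_add, map_smul,
        map_smul, coeff_binaryExp_binaryForm, coeff_binaryExp_binaryForm,
        coeff_binaryExp_binaryForm] at this
    have e₀ := hk 0
    have e₁ := hk 1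
    have e₂ := hk 2
    simp only [cubicDerivU, cubicDerivV, Fin.isValue, Matrix.cons_val_zero, Matrix.cons_val_one,
      Matrix.cons_val_two, Matrix.head_cons, Matrix.tail_cons] at e₀ e₁ e₂
    -- evaluate the quadratic forms at `(u, v) = (b 0, -a 0)`, where `α₁` vanishes
    have key : c₀ * a 0 + c₁ * b 0 = 0 := by
      have : (c₀ * a 0 + c₁ * b 0) * ((a 0 * b 1 - a 1 * b 0) * (a 0 * b 2 - a 2 * b 0)) = 0 := by
        linear_combination a 0 * b 0 * e₁ - a 0 ^ 2 * e₀ - b 0 ^ 2 * e₂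
      exact (mul_eq_zero.1 this).resolve_right (mul_ne_zero h₀₁ h₀₂)
    obtain ⟨t, ht⟩ : ∃ t, t * (a 0 * b 1 - a 1 * b 0) = c₀ * a 1 + c₁ * b 1 :=
      ⟨_, div_mul_cancel₀ _ h₀₁⟩
    obtain rfl : c₀ = -(t * b 0) :=
      mul_right_cancel₀ h₀₁ (by linear_combination b 0 * ht + b 1 * key)
    obtain rfl : c₁ = t * a 0 :=
      mul_right_cancel₀ h₀₁ (by linear_combination -(a 0 * ht) - a 1 * key)
    have hL : linForm (a 0) (b 0) ≠ 0 := linForm_ne_zero fun h₀ => h₀₁ (by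
      obtain ⟨ha, hb⟩ := Prod.mk.inj h₀
      simp [ha, hb])
    refine ⟨t, mul_left_cancel₀ hL ?_⟩
    rw [h, mul_smul_comm, linForm_mul_wedgeCoeff]
    module
  · rintro ⟨c, hc⟩
    refine ⟨-(c * b 0), c * a 0, ?_⟩
    rw [hc, mul_smul_comm, linForm_mul_wedgeCoeff]
    module

theorem mem_jacobian_iff_tangent_proportional_general
    (g f : MvPowerSeries (Fin 2) ℂ) (a b : Fin 3 → ℂ) (p q : ℂ)
    (hprop : ∀ i j : Fin 3, i ≠ j → a i * b j - a j * b i ≠ 0)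
    (hglow : ∀ s : Fin 2 →₀ ℕ, s.sum (fun _ n => n) < 3 → MvPowerSeries.coeff s g = 0)
    (hgjet : ∀ s : Fin 2 →₀ ℕ, s.sum (fun _ n => n) = 3 →
      MvPowerSeries.coeff s g =
      MvPowerSeries.coeff s (linForm (a 0) (b 0) * linForm (a 1) (b 1) * linForm (a 2) (b 2)))
    (hflow : ∀ s : Fin 2 →₀ ℕ, s.sum (fun _ n => n) < 2 → MvPowerSeries.coeff s f = 0)
    (hfjet : ∀ s : Fin 2 →₀ ℕ, s.sum (fun _ n => n) = 2 →
      MvPowerSeries.coeff s f =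
      MvPowerSeries.coeff s (linForm (a 0) (b 0) * linForm p q)) :
    f ∈ Ideal.span {psDeriv 0 g, psDeriv 1 g} ↔
      ∃ c : ℂ, linForm p q =
        c • (a 0 • (b 2 • linForm (a 1) (b 1) + b 1 • linForm (a 2) (b 2))
             - b 0 • (a 2 • linForm (a 1) (b 1) + a 1 • linForm (a 2) (b 2))) := by
  have hg : g ∈ orderIdeal 3 := mem_orderIdeal_iff.2 hglow
  have hf : f ∈ orderIdeal 2 := mem_orderIdeal_iff.2 hflow
  have hf₂ : homogeneousComponent 2 f = linForm (a 0) (b 0) * linForm p q :=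
    homogeneousComponent_eq_of_coeff_eq
      (IsHomogeneous.mul (isHomogeneous_linForm _ _) (isHomogeneous_linForm _ _)) hfjet
  have hD : ∀ i, homogeneousComponent 2 (pderiv ℂ i g) = pderiv ℂ i (cubicForm a b) := fun i => by
    rw [homogeneousComponent_pderiv,
      homogeneousComponent_eq_of_coeff_eq (isHomogeneous_cubicForm a b) hgjet]
  have hJ : orderIdeal 3 ≤ Ideal.span {pderiv ℂ 0 g, pderiv ℂ 1 g} :=
    orderIdeal_three_le_span_pair (pderiv_mem_orderIdeal 0 hg) (pderiv_mem_orderIdeal 1 hg)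
      ((hD 0).trans (pderiv_zero_cubicForm a b)) ((hD 1).trans (pderiv_one_cubicForm a b))
      (det_sylvesterMatrix_cubicDeriv_ne_zero (hprop 0 1 (by decide)) (hprop 0 2 (by decide))
        (hprop 1 2 (by decide))).isUnit
  simp only [psDeriv_eq_pderiv]
  rw [mem_span_pair_iff_homogeneousComponent hJ (pderiv_mem_orderIdeal 0 hg)
    (pderiv_mem_orderIdeal 1 hg) hf, hf₂, hD 0, hD 1]
  exact exists_linForm_mul_eq_iff (hprop 0 1 (by decide)) (hprop 0 2 (by decide))

/-- Let g have a D₄ singularity with 3-jet α₁α₂α₃ (αᵢ = aᵢu + bᵢv pairwise non-proportional)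
and let f have 2-jet α₁·α with α = p·u + q·v.  Then f ∈ J_g = (g_u, g_v) iff α is
proportional to the coefficient of du∧dv in dα₁ ∧ d(α₂α₃), namely the linear form
a₁·(b₃α₂ + b₂α₃) - b₁·(a₃α₂ + a₂α₃). -/
theorem mem_jacobian_iff_tangent_proportional
    (g f : MvPowerSeries (Fin 2) ℂ) (a b : Fin 3 → ℂ) (p q : ℂ)
    (hne : ∀ i, (a i, b i) ≠ (0, 0))
    (hprop : ∀ i j : Fin 3, i ≠ j → a i * b j - a j * b i ≠ 0)
    (hglow : ∀ s : Fin 2 →₀ ℕ, s.sum (fun _ n => n) < 3 → MvPowerSeries.coeff s g = 0)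
    (hgjet : ∀ s : Fin 2 →₀ ℕ, s.sum (fun _ n => n) = 3 →
      MvPowerSeries.coeff s g =
      MvPowerSeries.coeff s (linForm (a 0) (b 0) * linForm (a 1) (b 1) * linForm (a 2) (b 2)))
    (hflow : ∀ s : Fin 2 →₀ ℕ, s.sum (fun _ n => n) < 2 → MvPowerSeries.coeff s f = 0)
    (hfjet : ∀ s : Fin 2 →₀ ℕ, s.sum (fun _ n => n) = 2 →
      MvPowerSeries.coeff s f =
      MvPowerSeries.coeff s (linForm (a 0) (b 0) * linForm p q)) :
    f ∈ Ideal.span {psDeriv 0 g, psDeriv 1 g} ↔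
      ∃ c : ℂ, linForm p q =
        c • (a 0 • (b 2 • linForm (a 1) (b 1) + b 1 • linForm (a 2) (b 2))
             - b 0 • (a 2 • linForm (a 1) (b 1) + a 1 • linForm (a 2) (b 2))) :=
  mem_jacobian_iff_tangent_proportional_general g f a b p q hprop hglow hgjet hflow hfjet
end

section
/- For any six distinct complex parameters t₁,…,t₆, the 6×3 matrix of the linear system E₁,…,E₆ in unknowns c₁,c₂,c₃, where E₁: (t₁-t₃)(t₄-t₆)c₁ + (t₁-t₅)(t₂-t₄)c₃ = 0, E₂: (t₂-t₆)(t₃-t₅)c₁ + (t₂-t₄)(t₅-t₁)c₂ = 0, E₃: (t₃-t₁)(t₄-t₆)c₂ + (t₃-t₅)(t₆-t₂)c₃ = 0, E₄: (t₄-t₆)(t₁-t₃)c₁ + (t₄-t₂)(t₅-t₁)c₃ = 0, E₅: (t₅-t₃)(t₆-t₂)c₁ + (t₅-t₁)(t₂-t₄)c₂ = 0, E₆: (t₆-t₄)(t₁-t₃)c₂ + (t₆-t₂)(t₃-t₅)c₃ = 0, has all of its 3×3 minors equal to zero; in particular the system admits a nontrivial solution (c₁,c₂,c₃). -/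
/-- The 6×3 coefficient matrix of the system E₁,…,E₆ in the unknowns c₁,c₂,c₃. -/
noncomputable def pascalMatrix (t : Fin 6 → ℂ) : Matrix (Fin 6) (Fin 3) ℂ :=
  Matrix.of
    ![![(t 0 - t 2) * (t 3 - t 5), 0, (t 0 - t 4) * (t 1 - t 3)],
      ![(t 1 - t 5) * (t 2 - t 4), (t 1 - t 3) * (t 4 - t 0), 0],
      ![0, (t 2 - t 0) * (t 3 - t 5), (t 2 - t 4) * (t 5 - t 1)],
      ![(t 3 - t 5) * (t 0 - t 2), 0, (t 3 - t 1) * (t 4 - t 0)],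
      ![(t 4 - t 2) * (t 5 - t 1), (t 4 - t 0) * (t 1 - t 3), 0],
      ![0, (t 5 - t 3) * (t 0 - t 2), (t 5 - t 1) * (t 2 - t 4)]]

@[simp] lemma pascal_cons_val_five {α : Type*} (x : α) (u : Fin 5 → α) :
    Matrix.vecCons x u 5 = u 4 := rfl

/-- The three distinct rows of `pascalMatrix`, as a 3×3 matrix. -/
noncomputable def pascalM3 (t : Fin 6 → ℂ) : Matrix (Fin 3) (Fin 3) ℂ :=
  Matrix.of
    ![![(t 0 - t 2) * (t 3 - t 5), 0, (t 0 - t 4) * (t 1 - t 3)],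
      ![(t 1 - t 5) * (t 2 - t 4), (t 1 - t 3) * (t 4 - t 0), 0],
      ![0, (t 2 - t 0) * (t 3 - t 5), (t 2 - t 4) * (t 5 - t 1)]]

lemma pascal_eq (t : Fin 6 → ℂ) :
    pascalMatrix t = (pascalM3 t).submatrix (![0, 1, 2, 0, 1, 2] : Fin 6 → Fin 3) id := by
  funext i j
  fin_cases i <;> fin_cases j <;>
    simp [pascalMatrix, pascalM3, Matrix.submatrix, Matrix.cons_val_succ] <;> ring

lemma det_pascalM3 (t : Fin 6 → ℂ) : (pascalM3 t).det = 0 := by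
  simp [pascalM3, Matrix.det_fin_three]
  ring

lemma det_sub (t : Fin 6 → ℂ) (s : Fin 3 → Fin 3) :
    ((pascalM3 t).submatrix s id).det = 0 := by
  by_cases hs : Function.Injective s
  · have hb : Function.Bijective s := Finite.injective_iff_bijective.mp hs
    have : ((pascalM3 t).submatrix s id) =
        ((pascalM3 t).submatrix (Equiv.ofBijective s hb) id) := rfl
    rw [this, Matrix.det_permute, det_pascalM3, mul_zero]
  · rw [Function.not_injective_iff] at hs
    obtain ⟨i, j, hij, hne⟩ := hs
    exact Matrix.det_zero_of_row_eq hne (funext fun k => by simp [Matrix.submatrix_apply, hij])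

/-- For any six distinct parameters, every 3×3 minor of the matrix of the system
E₁,…,E₆ vanishes; in particular the system has a nontrivial solution. -/
theorem pascalMatrix_minors_vanish (t : Fin 6 → ℂ) (ht : Function.Injective t) :
    (∀ r : Fin 3 → Fin 6, Function.Injective r →
      ((pascalMatrix t).submatrix r id).det = 0) ∧
    ∃ c : Fin 3 → ℂ, c ≠ 0 ∧ (pascalMatrix t).mulVec c = 0 := by
  constructor
  · intro r _
    rw [pascal_eq, Matrix.submatrix_submatrix]
    exact det_sub t _
  · refine ⟨![(t 0 - t 4) * (t 1 - t 3), (t 1 - t 5) * (t 2 - t 4),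
        -((t 0 - t 2) * (t 3 - t 5))], ?_, ?_⟩
    · intro h
      have h0 := congrFun h 0
      simp only [Matrix.cons_val_zero, Pi.zero_apply, mul_eq_zero, sub_eq_zero] at h0
      rcases h0 with h0 | h0
      · exact (by decide : (0 : Fin 6) ≠ 4) (ht h0)
      · exact (by decide : (1 : Fin 6) ≠ 3) (ht h0)
    · funext i
      fin_cases i <;>
        simp [pascalMatrix, Matrix.mulVec, dotProduct, Fin.sum_univ_three, Matrix.cons_val_succ] <;> ring
end

section
/- Let f = ℓ'·w ∈ ℂ[x,y,z] be a reduced homogeneous polynomial divisible by a linear form ℓ'. Suppose h = a·f_x + b·f_y + c·f_z for homogeneous a,b,c, and h is divisible by ℓ'. Then for every point q on the line ℓ' = 0 with w(q) ≠ 0, one has a(q)·ℓ'_x + b(q)·ℓ'_y + c(q)·ℓ'_z = 0. -/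
open MvPolynomial

/-- If f = ℓ'·w is reduced, h = a·f_x + b·f_y + c·f_z and ℓ' divides h, then at every point q
of the line ℓ' = 0 with w(q) ≠ 0 one has a(q)·ℓ'_x + b(q)·ℓ'_y + c(q)·ℓ'_z = 0. -/
theorem syzygy_restricts_to_line
    (l w f h a b c : MvPolynomial (Fin 3) ℂ)
    (hl : l.IsHomogeneous 1) (hl0 : l ≠ 0)
    (hf : f = l * w) (hred : Squarefree f)
    (hh : h = a * pderiv 0 f + b * pderiv 1 f + c * pderiv 2 f)
    (hdvd : l ∣ h)
    (q : Fin 3 → ℂ) (hq : eval q l = 0) (hw : eval q w ≠ 0) :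
    eval q a * eval q (pderiv 0 l) + eval q b * eval q (pderiv 1 l) +
      eval q c * eval q (pderiv 2 l) = 0 := by
  set s : MvPolynomial (Fin 3) ℂ :=
    a * pderiv 0 l + b * pderiv 1 l + c * pderiv 2 l with hs
  set t : MvPolynomial (Fin 3) ℂ :=
    a * pderiv 0 w + b * pderiv 1 w + c * pderiv 2 w with ht
  have hhe : h = s * w + l * t := by
    subst hf
    rw [hh]
    simp only [pderiv_mul, hs, ht]
    ring
  have hsw : l ∣ s * w := by
    have : s * w = h - l * t := by rw [hhe]; ring
    rw [this]
    exact dvd_sub hdvd (Dvd.intro t rfl)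
  obtain ⟨u, hu⟩ := hsw
  have h0 : eval q s * eval q w = 0 := by
    have := congrArg (eval q) hu
    simpa [hq] using this
  have hs0 : eval q s = 0 := by
    rcases mul_eq_zero.mp h0 with h' | h'
    · exact h'
    · exact absurd h' hw
  simpa [hs] using hs0
end

section
/- Let f = f₁ f₂ ⋯ f_d ∈ ℂ[x,y,z] be a product of d ≥ 2 distinct linear forms, and let ℓ be a linear form not proportional to any f_i. Then adding the line ℓ = 0 to the line arrangement f = 0 cannot decrease the minimal degree of a Jacobian relation: mdr(f·ℓ) ≥ mdr(f). -/
open MvPolynomial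

lemma finsupp_degree_one {σ : Type*} [DecidableEq σ] {d : σ →₀ ℕ} (h : d.degree = 1) :
    ∃ i, d = Finsupp.single i 1 := by
  have hd0 : d ≠ 0 := by
    rintro rfl; simp [map_zero] at h
  obtain ⟨i, hi⟩ := Finsupp.ne_iff.mp hd0
  simp only [Finsupp.coe_zero, Pi.zero_apply] at hi
  have hle : d i ≤ 1 := h ▸ Finsupp.le_degree i d
  have hdi : d i = 1 := le_antisymm hle (Nat.one_le_iff_ne_zero.mpr hi)
  refine ⟨i, Finsupp.ext fun j => ?_⟩
  rcases eq_or_ne j i with rfl | hj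
  · simp [hdi]
  · rw [Finsupp.single_apply, if_neg (Ne.symm hj)]
    by_contra hdj
    have hij : i ∈ d.support := Finsupp.mem_support_iff.mpr hi
    have hjj : j ∈ d.support := Finsupp.mem_support_iff.mpr hdj
    have h2 : d i + d j ≤ d.degree := by
      rw [Finsupp.degree]
      have := Finset.sum_le_sum_of_subset (s := ({i, j} : Finset σ))
        (t := d.support) (by intro x hx; simp at hx; rcases hx with rfl|rfl <;> assumption)
        (f := fun k => d k)
      rwa [Finset.sum_pair (Ne.symm hj)] at this
    omega

lemma linear_expand {σ : Type*} [Fintype σ] [DecidableEq σ] {l : MvPolynomial σ ℂ}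
    (hl : l.IsHomogeneous 1) :
    l = ∑ i, C (l.coeff (Finsupp.single i 1)) * X i := by
  ext d
  rw [coeff_sum]
  by_cases hd : ∃ i, d = Finsupp.single i 1
  · obtain ⟨i, rfl⟩ := hd
    rw [Finset.sum_eq_single i]
    · simp [coeff_C_mul, coeff_X']
    · intro j _ hj
      rw [coeff_C_mul, coeff_X', if_neg, mul_zero]
      intro hs
      exact hj (by simpa using (Finsupp.single_left_injective one_ne_zero) hs.symm ▸ rfl)
    · simp
  · have h1 : l.coeff d = 0 := by
      by_contra hc
      exact hd (finsupp_degree_one (by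
        rw [Finsupp.degree_eq_weight_one]; exact hl hc))
    rw [h1]
    symm
    apply Finset.sum_eq_zero
    intro j _
    rw [coeff_C_mul, coeff_X', if_neg, mul_zero]
    exact fun hs => hd ⟨j, hs.symm⟩

lemma euler_identity {σ : Type*} [Fintype σ] [DecidableEq σ] {f : MvPolynomial σ ℂ} {n : ℕ}
    (hf : f.IsHomogeneous n) :
    ∑ i, X i * pderiv i f = (n : ℂ) • f := by
  conv_lhs => rw [f.as_sum]
  have key : ∀ d ∈ f.support, ∀ i : σ,
      X i * pderiv i (monomial d (f.coeff d)) = monomial d (f.coeff d * (d i : ℂ)) := by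
    intro d _ i
    rw [pderiv_monomial]
    rcases Nat.eq_zero_or_pos (d i) with h0 | hpos
    · simp [h0]
    · have hle : Finsupp.single i 1 ≤ d := by
        rw [Finsupp.single_le_iff]; exact hpos
      rw [X, monomial_mul, one_mul, add_comm, tsub_add_cancel_of_le hle]
  calc ∑ i, X i * pderiv i (∑ d ∈ f.support, monomial d (f.coeff d))
      = ∑ i, ∑ d ∈ f.support, X i * pderiv i (monomial d (f.coeff d)) := by
        simp_rw [map_sum, Finset.mul_sum]
    _ = ∑ d ∈ f.support, ∑ i, monomial d (f.coeff d * (d i : ℂ)) := by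
        rw [Finset.sum_comm]
        exact Finset.sum_congr rfl fun d hd => Finset.sum_congr rfl fun i _ => key d hd i
    _ = ∑ d ∈ f.support, monomial d (f.coeff d * (n : ℂ)) := by
        refine Finset.sum_congr rfl fun d hd => ?_
        have hdn : d.degree = n := by
          rw [Finsupp.degree_eq_weight_one]
          exact hf (mem_support_iff.mp hd)
        have hsum : ∑ i, ((d i : ℂ)) = (n : ℂ) := by
          rw [← Nat.cast_sum]
          norm_cast
          rw [← hdn, Finsupp.degree]
          exact (Finset.sum_subset (Finset.subset_univ _)
            (fun x _ hx => by simpa using Finsupp.notMem_support_iff.mp hx)).symm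
        calc ∑ i, monomial d (f.coeff d * (d i : ℂ))
            = monomial d (f.coeff d * ∑ i, (d i : ℂ)) := by
              rw [Finset.mul_sum, map_sum]
          _ = monomial d (f.coeff d * (n : ℂ)) := by rw [hsum]
    _ = (n : ℂ) • f := by
        conv_rhs => rw [f.as_sum]
        rw [Finset.smul_sum]
        exact Finset.sum_congr rfl fun d _ => by rw [smul_monomial, mul_comm,
          smul_eq_mul]

lemma pderiv_isHomogeneous {σ : Type*} [DecidableEq σ] {f : MvPolynomial σ ℂ} {n : ℕ}
    (hf : f.IsHomogeneous n) (i : σ) : (pderiv i f).IsHomogeneous (n - 1) := by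
  conv =>
    rw [f.as_sum]
  rw [map_sum]
  apply IsHomogeneous.sum
  intro d hd
  rw [pderiv_monomial]
  rcases Nat.eq_zero_or_pos (d i) with h0 | hpos
  · rw [h0]; simp only [Nat.cast_zero, mul_zero, monomial_zero]
    exact isHomogeneous_zero _ _ _
  · apply isHomogeneous_monomial
    have hdn : d.degree = n := by
      rw [Finsupp.degree_eq_weight_one]; exact hf (mem_support_iff.mp hd)
    have hle : Finsupp.single i 1 ≤ d := by rw [Finsupp.single_le_iff]; exact hpos
    have hkey : (d - Finsupp.single i 1).degree + 1 = d.degree := by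
      simp only [Finsupp.degree_eq_weight_one]
      have h1 : (Finsupp.weight (1 : σ → ℕ)) (Finsupp.single i 1) = 1 := by
        simp [Finsupp.weight_apply]
      have h2 : (Finsupp.weight (1 : σ → ℕ)) ((d - Finsupp.single i 1) + Finsupp.single i 1)
          = (Finsupp.weight (1 : σ → ℕ)) d := by rw [tsub_add_cancel_of_le hle]
      rw [map_add, h1] at h2
      exact h2
    omega

lemma homogeneousComponent_mul_homog {σ : Type*} {p q : MvPolynomial σ ℂ} {m k : ℕ}
    (hp : p.IsHomogeneous m) :
    homogeneousComponent (m + k) (p * q) = p * homogeneousComponent k q := by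
  conv_lhs => rw [← q.sum_homogeneousComponent]
  rw [Finset.mul_sum, map_sum]
  have hterm : ∀ j, homogeneousComponent (m + k) (p * homogeneousComponent j q)
      = if j = k then p * homogeneousComponent k q else 0 := by
    intro j
    have hh : (p * homogeneousComponent j q).IsHomogeneous (m + j) :=
      hp.mul (homogeneousComponent_isHomogeneous j q)
    rw [homogeneousComponent_of_mem hh]
    by_cases hjk : j = k
    · subst hjk; simp
    · rw [if_neg (by omega), if_neg hjk]
  simp_rw [hterm]
  rw [Finset.sum_ite_eq' (Finset.range (q.totalDegree + 1)) k]
  by_cases hk : k ∈ Finset.range (q.totalDegree + 1)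
  · rw [if_pos hk]
  · rw [if_neg hk]
    rw [homogeneousComponent_eq_zero _ q (by simpa using hk), mul_zero]

lemma prime_of_linear_pivot0 {l : MvPolynomial (Fin 3) ℂ} (hl : l.IsHomogeneous 1)
    (hp : l.coeff (Finsupp.single 0 1) ≠ 0) : Prime l := by
  have hE := MulEquiv.prime_iff (MvPolynomial.finSuccEquiv ℂ 2).toRingEquiv.toMulEquiv
    (p := l)
  rw [← hE]
  set c : Fin 3 → ℂ := fun i => l.coeff (Finsupp.single i 1) with hc
  have hexp : l = C (c 0) * X 0 + C (c 1) * X 1 + C (c 2) * X 2 := by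
    conv_lhs => rw [linear_expand hl]
    rw [Fin.sum_univ_three]
  have h1 : (1 : Fin 3) = Fin.succ 0 := rfl
  have h2 : (2 : Fin 3) = Fin.succ 1 := rfl
  set m : MvPolynomial (Fin 2) ℂ := C (c 1) * X 0 + C (c 2) * X 1 with hm
  have himg : (MvPolynomial.finSuccEquiv ℂ 2) l
      = Polynomial.C (C (c 0)) * Polynomial.X + Polynomial.C m := by
    have hC : ∀ r : ℂ, (MvPolynomial.finSuccEquiv ℂ 2) (C r) = Polynomial.C (C r) := by
      intro r
      rw [finSuccEquiv_apply, eval₂Hom_C]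
      rfl
    rw [hexp, h1, h2, hm]
    simp only [map_add, map_mul, finSuccEquiv_X_zero, finSuccEquiv_X_succ, hC]
    rw [← h1, ← h2]
    ring
  have hfact : Polynomial.C (C (c 0)) * Polynomial.X + Polynomial.C m
      = Polynomial.C (C (c 0)) * (Polynomial.X - Polynomial.C (-(C (c 0)⁻¹ * m))) := by
    rw [mul_sub, ← Polynomial.C_mul, mul_neg, ← mul_assoc, ← MvPolynomial.C_mul,
      mul_inv_cancel₀ hp, MvPolynomial.C_1, one_mul, Polynomial.C_neg, sub_neg_eq_add]
  have hu : IsUnit (Polynomial.C (MvPolynomial.C (c 0) : MvPolynomial (Fin 2) ℂ)) :=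
    ((isUnit_iff_ne_zero.mpr hp).map MvPolynomial.C).map Polynomial.C
  have hprime : Prime (Polynomial.X - Polynomial.C (-(C (c 0)⁻¹ * m))) :=
    Polynomial.prime_X_sub_C _
  have hassoc : Associated (Polynomial.X - Polynomial.C (-(C (c 0)⁻¹ * m)))
      (Polynomial.C (C (c 0)) * (Polynomial.X - Polynomial.C (-(C (c 0)⁻¹ * m)))) :=
    ⟨hu.unit, by rw [IsUnit.unit_spec, mul_comm]⟩
  rw [show ((MvPolynomial.finSuccEquiv ℂ 2).toRingEquiv.toMulEquiv l
      : Polynomial (MvPolynomial (Fin 2) ℂ)) = (MvPolynomial.finSuccEquiv ℂ 2) l from rfl,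
    himg, hfact]
  exact hassoc.prime hprime

lemma prime_of_linear {l : MvPolynomial (Fin 3) ℂ} (hl : l.IsHomogeneous 1) (h0 : l ≠ 0) :
    Prime l := by
  have hex : ∃ i, l.coeff (Finsupp.single i 1) ≠ 0 := by
    by_contra h
    push_neg at h
    apply h0
    rw [linear_expand hl]
    simp [h]
  obtain ⟨i₀, hi₀⟩ := hex
  have hE := MulEquiv.prime_iff (MvPolynomial.renameEquiv ℂ (Equiv.swap (0 : Fin 3) i₀)).toRingEquiv.toMulEquiv (p := l)
  rw [← hE]
  apply prime_of_linear_pivot0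
  · exact hl.rename_isHomogeneous
  · have := coeff_rename_mapDomain (Equiv.swap (0 : Fin 3) i₀)
      (Equiv.injective _) l (Finsupp.single i₀ 1)
    rw [Finsupp.mapDomain_single, Equiv.swap_apply_right] at this
    rw [show ((MvPolynomial.renameEquiv ℂ (Equiv.swap (0 : Fin 3) i₀)).toRingEquiv.toMulEquiv l)
        = rename (Equiv.swap (0 : Fin 3) i₀) l from rfl, this]
    exact hi₀

lemma homog_linear_dvd_eq {p q : MvPolynomial (Fin 3) ℂ} (hp : p.IsHomogeneous 1)
    (hq : q.IsHomogeneous 1) (hpq : p ∣ q) (hq0 : q ≠ 0) :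
    ∃ e : ℂ, e ≠ 0 ∧ q = p * C e := by
  obtain ⟨u, hu⟩ := hpq
  have h1 : homogeneousComponent (1 + 0) (p * u) = p * homogeneousComponent 0 u :=
    homogeneousComponent_mul_homog hp
  rw [← hu] at h1
  rw [homogeneousComponent_of_mem (mem_homogeneousSubmodule _ _ |>.mpr hq), if_pos rfl,
    homogeneousComponent_zero] at h1
  refine ⟨u.coeff 0, ?_, h1⟩
  intro h
  rw [h, map_zero, mul_zero] at h1
  exact hq0 h1

/-- Adding a line to a line arrangement cannot decrease the minimal degree of a Jacobian
relation: if f is a product of d ≥ 2 distinct linear forms and ℓ is a further linear form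
not proportional to any of them, then any nonzero degree-r Jacobian syzygy for f·ℓ forces
the existence of a nonzero Jacobian syzygy for f of some degree r' ≤ r; i.e.
mdr(f·ℓ) ≥ mdr(f). -/
theorem mdr_not_decrease_add_line
    (d : ℕ) (hd : 2 ≤ d) (li : Fin d → MvPolynomial (Fin 3) ℂ)
    (hhom : ∀ i, (li i).IsHomogeneous 1)
    (hdist : ∀ i j, i ≠ j → ∀ c : ℂ, li i ≠ c • li j)
    (f : MvPolynomial (Fin 3) ℂ) (hf : f = ∏ i, li i)
    (l : MvPolynomial (Fin 3) ℂ) (hl : l.IsHomogeneous 1)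
    (hlnew : ∀ i, ∀ c : ℂ, l ≠ c • li i)
    (r : ℕ)
    (hsyz : ∃ a b c : MvPolynomial (Fin 3) ℂ,
      a.IsHomogeneous r ∧ b.IsHomogeneous r ∧ c.IsHomogeneous r ∧
      ¬ (a = 0 ∧ b = 0 ∧ c = 0) ∧
      a * pderiv 0 (f * l) + b * pderiv 1 (f * l) + c * pderiv 2 (f * l) = 0) :
    ∃ r' ≤ r, ∃ a b c : MvPolynomial (Fin 3) ℂ,
      a.IsHomogeneous r' ∧ b.IsHomogeneous r' ∧ c.IsHomogeneous r' ∧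
      ¬ (a = 0 ∧ b = 0 ∧ c = 0) ∧
      a * pderiv 0 f + b * pderiv 1 f + c * pderiv 2 f = 0 := by
  obtain ⟨a, b, c, ha, hb, hc, hne, heq⟩ := hsyz
  -- basic nonvanishing facts
  have i0 : Fin d := ⟨0, by omega⟩
  have hli0 : ∀ i, li i ≠ 0 := by
    intro i
    rcases eq_or_ne i ⟨0, by omega⟩ with rfl | hi
    · have := hdist ⟨0, by omega⟩ ⟨1, by omega⟩ (by simp [Fin.ext_iff]) 0
      simpa using this
    · have := hdist i ⟨0, by omega⟩ hi 0
      simpa using this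
  have hf0 : f ≠ 0 := by
    rw [hf]
    exact Finset.prod_ne_zero_iff.mpr fun i _ => hli0 i
  have hl0 : l ≠ 0 := by
    have := hlnew ⟨0, by omega⟩ 0
    simpa using this
  have hprime : Prime l := prime_of_linear hl hl0
  have hfhom : f.IsHomogeneous d := by
    rw [hf]
    have := IsHomogeneous.prod Finset.univ li (fun _ => 1) (fun i _ => hhom i)
    simpa using this
  have hndvd : ¬ (l ∣ f) := by
    intro hdvd
    rw [hf] at hdvd
    obtain ⟨i, _, hdvd'⟩ := hprime.exists_mem_finset_dvd hdvd
    obtain ⟨e, he0, hee⟩ := homog_linear_dvd_eq hl (hhom i) hdvd' (hli0 i)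
    apply hlnew i e⁻¹
    rw [smul_eq_C_mul, hee]
    rw [mul_comm l (C e), ← mul_assoc, ← C_mul, inv_mul_cancel₀ he0, C_1, one_mul]
  -- the two fundamental polynomials
  have hmul : ∀ i : Fin 3, pderiv i (f * l) = pderiv i f * l + f * pderiv i l :=
    fun i => pderiv_mul
  have h0 : (a * pderiv 0 f + b * pderiv 1 f + c * pderiv 2 f) * l
      + f * (a * pderiv 0 l + b * pderiv 1 l + c * pderiv 2 l) = 0 := by
    rw [hmul 0, hmul 1, hmul 2] at heq
    linear_combination heq
  set T := a * pderiv 0 f + b * pderiv 1 f + c * pderiv 2 f with hT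
  set S := a * pderiv 0 l + b * pderiv 1 l + c * pderiv 2 l with hS
  by_cases hS0 : S = 0
  · refine ⟨r, le_rfl, a, b, c, ha, hb, hc, hne, ?_⟩
    rw [hS0, mul_zero, add_zero, mul_eq_zero] at h0
    exact h0.resolve_right hl0
  · -- S is homogeneous of degree r
    have hShom : S.IsHomogeneous r := by
      rw [hS]
      have h1 : ∀ i : Fin 3, (pderiv i l).IsHomogeneous 0 := fun i => pderiv_isHomogeneous hl i
      exact ((ha.mul (h1 0)).add (hb.mul (h1 1))).add (hc.mul (h1 2))
    have hldvdS : l ∣ S := by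
      refine (hprime.dvd_or_dvd ⟨-T, ?_⟩).resolve_left hndvd
      linear_combination h0
    obtain ⟨g₀, hg₀⟩ := hldvdS
    have hr1 : 1 ≤ r := by
      by_contra hr
      have hr0 : r = 0 := by omega
      subst hr0
      have hSC : S = C (S.coeff 0) := by
        have := homogeneousComponent_of_mem (mem_homogeneousSubmodule 0 S |>.mpr hShom)
          (m := 0)
        rw [if_pos rfl, homogeneousComponent_zero] at this
        exact this.symm
      have hu : IsUnit S := by
        rw [hSC]
        exact (isUnit_iff_ne_zero.mpr (fun h => hS0 (by rwa [h, map_zero] at hSC))).map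
          (C : ℂ →+* MvPolynomial (Fin 3) ℂ)
      exact hprime.not_unit (isUnit_of_dvd_unit ⟨g₀, hg₀⟩ hu)
    set g := homogeneousComponent (r - 1) g₀ with hg
    have hlg : l * g = S := by
      have h1 : homogeneousComponent (1 + (r - 1)) (l * g₀) = l * g :=
        homogeneousComponent_mul_homog hl
      have h2 : (1 : ℕ) + (r - 1) = r := by omega
      rw [h2, ← hg₀] at h1
      rw [← h1, homogeneousComponent_of_mem (mem_homogeneousSubmodule r S |>.mpr hShom),
        if_pos rfl]
    have hghom : g.IsHomogeneous (r - 1) := homogeneousComponent_isHomogeneous _ _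
    have hg0 : g ≠ 0 := by
      intro h
      rw [h, mul_zero] at hlg
      exact hS0 hlg.symm
    -- Euler identities
    have hEf : X 0 * pderiv 0 f + X 1 * pderiv 1 f + X 2 * pderiv 2 f = C (d : ℂ) * f := by
      have := euler_identity hfhom
      rw [Fin.sum_univ_three] at this
      rw [this, smul_eq_C_mul]
    have hEl : X 0 * pderiv 0 l + X 1 * pderiv 1 l + X 2 * pderiv 2 l = l := by
      have := euler_identity hl
      rw [Fin.sum_univ_three] at this
      rw [this, Nat.cast_one, one_smul]
    have hD0 : (d : ℂ) ≠ 0 := Nat.cast_ne_zero.mpr (by omega)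
    have hDD : (C ((d : ℂ)⁻¹) : MvPolynomial (Fin 3) ℂ) * C (d : ℂ) = 1 := by
      rw [← C_mul, inv_mul_cancel₀ hD0, C_1]
    have hTg : T + f * g = 0 := by
      have h3 : l * (T + f * g) = 0 := by
        rw [← hlg] at h0
        linear_combination h0
      exact (mul_eq_zero.mp h3).resolve_left hl0
    -- the new syzygy
    refine ⟨r, le_rfl,
      a + C ((d : ℂ)⁻¹) * X 0 * g,
      b + C ((d : ℂ)⁻¹) * X 1 * g,
      c + C ((d : ℂ)⁻¹) * X 2 * g, ?_, ?_, ?_, ?_, ?_⟩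
    · refine ha.add ?_
      have h4 : (0 + 1 + (r - 1)) = r := by omega
      exact h4 ▸ (((isHomogeneous_C _ _).mul (isHomogeneous_X _ _)).mul hghom)
    · refine hb.add ?_
      have h4 : (0 + 1 + (r - 1)) = r := by omega
      exact h4 ▸ (((isHomogeneous_C _ _).mul (isHomogeneous_X _ _)).mul hghom)
    · refine hc.add ?_
      have h4 : (0 + 1 + (r - 1)) = r := by omega
      exact h4 ▸ (((isHomogeneous_C _ _).mul (isHomogeneous_X _ _)).mul hghom)
    · rintro ⟨ha', hb', hc'⟩
      have haa : a = -(C ((d : ℂ)⁻¹) * X 0 * g) := by linear_combination ha'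
      have hbb : b = -(C ((d : ℂ)⁻¹) * X 1 * g) := by linear_combination hb'
      have hcc : c = -(C ((d : ℂ)⁻¹) * X 2 * g) := by linear_combination hc'
      have hkey : g * l * (1 + C ((d : ℂ)⁻¹)) = 0 := by
        rw [hS, haa, hbb, hcc] at hlg
        linear_combination hlg - C ((d : ℂ)⁻¹) * g * hEl
      have hunit : (1 + C ((d : ℂ)⁻¹) : MvPolynomial (Fin 3) ℂ) ≠ 0 := by
        rw [← C_1, ← C_add]
        rw [Ne, C_eq_zero]
        intro h
        have h5 : ((d : ℂ) + 1) * (d : ℂ)⁻¹ = 0 := by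
          rw [add_mul, mul_inv_cancel₀ hD0, one_mul]
          linear_combination h
        rcases mul_eq_zero.mp h5 with h6 | h6
        · have : ((d + 1 : ℕ) : ℂ) = 0 := by push_cast; exact h6
          exact (Nat.cast_ne_zero.mpr (by omega)) this
        · exact hD0 (by rwa [inv_eq_zero] at h6)
      rcases mul_eq_zero.mp hkey with h7 | h7
      · exact hg0 ((mul_eq_zero.mp h7).resolve_right hl0)
      · exact hunit h7
    · rw [hT] at hTg
      linear_combination hTg + C ((d : ℂ)⁻¹) * g * hEf + g * f * hDD
end
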